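/- arXiv:1906.12214 — 6 statements merged into one kernel-verified Lean document; each statement's English description precedes it below -/
import Mathlib

section
/- Let A ∈ ℝ^{n×n}. If A is diagonally stable, i.e., there exists P ∈ 𝒟₊ such that PA + AᵀP is negative definite, then A is D-stable, i.e., AD is stable for every D ∈ 𝒟₊. Likewise, if A is diagonally semistable, i.e., there exists P ∈ 𝒟₊ such that PA + AᵀP is negative semidefinite, then A is D-semistable, i.e., AD is semistable for every D ∈ 𝒟₊. -/
open Matrix Polynomial Filter Topology

noncomputable section

/-- `D ∈ 𝒟₊`: a diagonal matrix with positive diagonal entries. -/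
def IsPosDiag {n : ℕ} (D : Matrix (Fin n) (Fin n) ℝ) : Prop :=
  ∃ d : Fin n → ℝ, (∀ i, 0 < d i) ∧ D = Matrix.diagonal d

/-- A real square matrix is stable if every root in `ℂ` of its characteristic
polynomial has negative real part. -/
def IsStableMat {n : ℕ} (A : Matrix (Fin n) (Fin n) ℝ) : Prop :=
  ∀ z : ℂ, (A.charpoly.map (algebraMap ℝ ℂ)).IsRoot z → z.re < 0

/-- A real square matrix is semistable if every root in `ℂ` of its characteristic
polynomial has non-positive real part. -/
def IsSemistableMat {n : ℕ} (A : Matrix (Fin n) (Fin n) ℝ) : Prop :=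
  ∀ z : ℂ, (A.charpoly.map (algebraMap ℝ ℂ)).IsRoot z → z.re ≤ 0

/-- The restriction `A|_S : S → S` of a matrix whose range is contained in `S`. -/
def restrictedMap {n : ℕ} (A : Matrix (Fin n) (Fin n) ℝ) (S : Submodule ℝ (Fin n → ℝ))
    (h : ∀ v, A.mulVec v ∈ S) : S →ₗ[ℝ] S :=
  A.mulVecLin.restrict (p := S) (q := S) (fun x _ => by simpa using h x)

/-- `A` is stable on `S`: `range A ⊆ S` and every eigenvalue over `ℂ` (root of the
characteristic polynomial) of `A|_S : S → S` has negative real part. -/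
def IsStableOn {n : ℕ} (A : Matrix (Fin n) (Fin n) ℝ) (S : Submodule ℝ (Fin n → ℝ)) : Prop :=
  ∃ h : ∀ v, A.mulVec v ∈ S,
    ∀ z : ℂ, (((restrictedMap A S h).charpoly).map (algebraMap ℝ ℂ)).IsRoot z → z.re < 0

/-- `A` is semistable on `S`: `range A ⊆ S` and every eigenvalue over `ℂ` of
`A|_S : S → S` has non-positive real part. -/
def IsSemistableOn {n : ℕ} (A : Matrix (Fin n) (Fin n) ℝ) (S : Submodule ℝ (Fin n → ℝ)) : Prop :=
  ∃ h : ∀ v, A.mulVec v ∈ S,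
    ∀ z : ℂ, (((restrictedMap A S h).charpoly).map (algebraMap ℝ ℂ)).IsRoot z → z.re ≤ 0

/-- `M < 0` on `S`. -/
def NegDefOn {n : ℕ} (M : Matrix (Fin n) (Fin n) ℝ) (S : Submodule ℝ (Fin n → ℝ)) : Prop :=
  ∀ x ∈ S, x ≠ 0 → x ⬝ᵥ M.mulVec x < 0

/-- `M ≤ 0` on `S`. -/
def NegSemidefOn {n : ℕ} (M : Matrix (Fin n) (Fin n) ℝ) (S : Submodule ℝ (Fin n → ℝ)) : Prop :=
  ∀ x ∈ S, x ⬝ᵥ M.mulVec x ≤ 0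

/-- `M > 0` on `S`. -/
def PosDefOn {n : ℕ} (M : Matrix (Fin n) (Fin n) ℝ) (S : Submodule ℝ (Fin n → ℝ)) : Prop :=
  ∀ x ∈ S, x ≠ 0 → 0 < x ⬝ᵥ M.mulVec x

/-- The Laplacian matrix `A_k` of the labeled digraph `(V,E)` with edge labels `k`:
`(A_k)_{i',i} = k_{i→i'}` if `(i→i') ∈ E`, `(A_k)_{i,i} = -∑_{(i→i')∈E} k_{i→i'}`,
and `0` otherwise (the graph has no self-loops). -/
def laplacian {m : ℕ} (E : Finset (Fin m × Fin m)) (k : Fin m × Fin m → ℝ) :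
    Matrix (Fin m) (Fin m) ℝ :=
  fun i' i => (if (i, i') ∈ E then k (i, i') else 0)
    - (if i' = i then ∑ e ∈ E.filter (fun e => e.1 = i), k e else 0)

/-- The incidence matrix `I_E ∈ ℝ^{V×E}`, with column `e_{i'} - e_i` for each edge `(i→i')`. -/
def incidence {m : ℕ} (E : Finset (Fin m × Fin m)) :
    Matrix (Fin m) {e : Fin m × Fin m // e ∈ E} ℝ :=
  fun i e => (if (e : Fin m × Fin m).2 = i then (1 : ℝ) else 0)
    - (if (e : Fin m × Fin m).1 = i then 1 else 0)

/-- `x^Ỹ ∈ ℝ^V`, defined by `(x^Ỹ)_j = ∏_i x_i ^ (Ỹ)_{ij}` (real exponents). -/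
def powVec {n m : ℕ} (x : Fin n → ℝ) (Yt : Matrix (Fin n) (Fin m) ℝ) : Fin m → ℝ :=
  fun j => ∏ i, (x i) ^ (Yt i j)

/-- The digraph `(V,E)` is weakly reversible: every connected component is strongly
connected, i.e. whenever `a` and `b` are connected by an undirected path, there is a
directed path from `a` to `b`. -/
def WeaklyReversible {m : ℕ} (E : Finset (Fin m × Fin m)) : Prop :=
  ∀ a b : Fin m,
    Relation.ReflTransGen (fun u v => (u, v) ∈ E ∨ (v, u) ∈ E) a b →
    Relation.ReflTransGen (fun u v => (u, v) ∈ E) a b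

/-- The stoichiometric subspace `S = range (Y I_E)`. -/
def stoichSubspace {n m : ℕ} (Y : Matrix (Fin n) (Fin m) ℝ) (E : Finset (Fin m × Fin m)) :
    Submodule ℝ (Fin n → ℝ) :=
  LinearMap.range (Y * incidence E).mulVecLin

/-- The Jacobian matrix `J(x) = Y A_k diag(x^Ỹ) Ỹᵀ diag(x⁻¹)` of `x ↦ Y A_k x^Ỹ`. -/
def jacobianMat {n m : ℕ} (E : Finset (Fin m × Fin m)) (k : Fin m × Fin m → ℝ)
    (Y Yt : Matrix (Fin n) (Fin m) ℝ) (x : Fin n → ℝ) : Matrix (Fin n) (Fin n) ℝ :=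
  Y * laplacian E k * Matrix.diagonal (powVec x Yt) * Ytᵀ * Matrix.diagonal (fun i => (x i)⁻¹)

/-- `C` is (the edge set of) a cycle: `{i_1→i_2, …, i_{r-1}→i_r, i_r→i_1}` with
pairwise distinct vertices `i_1, …, i_r` (and `r ≥ 2`). -/
def IsCycleEdges {m : ℕ} (C : Finset (Fin m × Fin m)) : Prop :=
  ∃ (r : ℕ) (f : Fin (r + 2) → Fin m), Function.Injective f ∧
    C = Finset.image (fun j => (f j, f (j + 1))) Finset.univ

/-- The edge set of the directed `m`-cycle `1 → 2 → ⋯ → m → 1`. -/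
def cycleEdges (m : ℕ) [NeZero m] : Finset (Fin m × Fin m) :=
  Finset.image (fun i : Fin m => (i, i + 1)) Finset.univ

end
lemma mapC_conjTranspose {n : ℕ} (M : Matrix (Fin n) (Fin n) ℝ) :
    (M.map (algebraMap ℝ ℂ))ᴴ = (Mᵀ).map (algebraMap ℝ ℂ) := by
  ext i j
  simp [Matrix.conjTranspose_apply, Matrix.map_apply, Complex.conj_ofReal]

lemma key_aux {n : ℕ} (A : Matrix (Fin n) (Fin n) ℝ) (p d : Fin n → ℝ)
    (hp : ∀ i, 0 < p i) (hd : ∀ i, 0 < d i) (z : ℂ)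
    (hz : (((A * Matrix.diagonal d).charpoly).map (algebraMap ℝ ℂ)).IsRoot z) :
    ∃ (a b : Fin n → ℝ) (c : ℝ), (a ≠ 0 ∨ b ≠ 0) ∧ 0 < c ∧
      a ⬝ᵥ (Matrix.diagonal p * A + Aᵀ * Matrix.diagonal p).mulVec a
        + b ⬝ᵥ (Matrix.diagonal p * A + Aᵀ * Matrix.diagonal p).mulVec b = 2 * z.re * c := by
  set f := algebraMap ℝ ℂ with hf
  -- from root of charpoly to eigenvector
  have hz' : (((A * Matrix.diagonal d).map f).charpoly).IsRoot z := by
    rwa [Matrix.charpoly_map]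
  have h0 : ((Matrix.scalar (Fin n) z) - (A * Matrix.diagonal d).map f).det = 0 := by
    rw [Polynomial.IsRoot, Matrix.charpoly, eval_det, matPolyEquiv_charmatrix] at hz'
    simpa using hz'
  obtain ⟨v, hv0, hveq⟩ := (Matrix.exists_mulVec_eq_zero_iff).2 h0
  have heig : ((A * Matrix.diagonal d).map f).mulVec v = z • v := by
    rw [Matrix.sub_mulVec, sub_eq_zero] at hveq
    rw [← hveq]
    ext i
    simp [Matrix.scalar_apply, Matrix.mulVec_diagonal]
  set w : Fin n → ℂ := fun i => (d i : ℂ) * v i with hw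
  have hAw : (A.map f).mulVec w = z • v := by
    have hsplit : (A * Matrix.diagonal d).map f
        = A.map f * Matrix.diagonal (fun i => (d i : ℂ)) := by
      rw [Matrix.map_mul]
      congr 1
      exact Matrix.diagonal_map (by simp)
    rw [hsplit, ← Matrix.mulVec_mulVec] at heig
    convert heig using 2
    · rfl
    ext i
    simp [Matrix.mulVec_diagonal, hw, mul_comm]
  set c : ℝ := ∑ i, p i * d i * Complex.normSq (v i) with hc
  have hcpos : 0 < c := by
    obtain ⟨i0, hi0⟩ := Function.ne_iff.mp hv0
    refine Finset.sum_pos' (fun i _ => ?_) ⟨i0, Finset.mem_univ _, ?_⟩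
    · have h1 := (hp i).le; have h2 := (hd i).le
      have h3 := Complex.normSq_nonneg (v i)
      positivity
    · have h0 : 0 < Complex.normSq (v i0) := by
        simpa [Complex.normSq_pos] using hi0
      have h1 := hp i0; have h2 := hd i0
      positivity
  set P : Matrix (Fin n) (Fin n) ℝ := Matrix.diagonal p with hP
  -- T1
  have hcdot : star w ⬝ᵥ (P.map f).mulVec v = (c : ℂ) := by
    have : ∀ i, star w i * ((P.map f).mulVec v) i
        = ((p i * d i * Complex.normSq (v i) : ℝ) : ℂ) := by
      intro i
      simp only [hP, Pi.star_apply, hw, Matrix.map_apply]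
      rw [show (Matrix.diagonal p).map f = Matrix.diagonal (fun i => (p i : ℂ)) from
        Matrix.diagonal_map (by simp)]
      rw [Matrix.mulVec_diagonal]
      push_cast
      rw [star_mul', Complex.star_def, Complex.conj_ofReal]
      rw [← Complex.mul_conj]
      ring
    rw [dotProduct, Finset.sum_congr rfl (fun i _ => this i), hc]
    push_cast
    ring
  have hT1 : star w ⬝ᵥ ((P * A).map f).mulVec w = z * (c : ℂ) := by
    rw [Matrix.map_mul, ← Matrix.mulVec_mulVec, hAw, Matrix.mulVec_smul,
      dotProduct_smul, smul_eq_mul, hcdot]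
  have hT2 : star w ⬝ᵥ ((Aᵀ * P).map f).mulVec w = (starRingEnd ℂ) (z * (c : ℂ)) := by
    rw [← hT1]
    have h1 : (starRingEnd ℂ) (star w ⬝ᵥ ((P * A).map f).mulVec w)
        = star (((P * A).map f).mulVec w) ⬝ᵥ w := (Matrix.star_dotProduct _ _).symm
    rw [h1, Matrix.star_mulVec, ← Matrix.dotProduct_mulVec, mapC_conjTranspose]
    have hPt : (P * A)ᵀ = Aᵀ * P := by
      rw [Matrix.transpose_mul, hP, Matrix.diagonal_transpose]
    rw [hPt]
  -- total
  set M : Matrix (Fin n) (Fin n) ℝ := P * A + Aᵀ * P with hM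
  have hT : star w ⬝ᵥ (M.map f).mulVec w = ((2 * z.re * c : ℝ) : ℂ) := by
    have hmadd : M.map ⇑f = (P * A).map ⇑f + (Aᵀ * P).map ⇑f := by
      ext i j; simp [hM, Matrix.mul_apply, Matrix.map_apply, map_sum]
    rw [hmadd, Matrix.add_mulVec, dotProduct_add, hT1, hT2]
    rw [Complex.add_conj]
    push_cast
    simp [Complex.mul_re]
    ring
  set a : Fin n → ℝ := fun i => (w i).re with ha
  set b : Fin n → ℝ := fun i => (w i).im with hb
  have hre : (star w ⬝ᵥ (M.map f).mulVec w).re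
      = a ⬝ᵥ M.mulVec a + b ⬝ᵥ M.mulVec b := by
    simp only [dotProduct, Matrix.mulVec, Matrix.map_apply, Finset.mul_sum,
      Complex.re_sum, ← Finset.sum_add_distrib]
    refine Finset.sum_congr rfl fun i _ => ?_
    refine Finset.sum_congr rfl fun j _ => ?_
    simp only [Pi.star_apply, Complex.star_def, hf, Complex.coe_algebraMap,
      Complex.mul_re, Complex.mul_im, Complex.conj_re, Complex.conj_im,
      Complex.ofReal_re, Complex.ofReal_im, ha, hb]
    ring
  refine ⟨a, b, c, ?_, hcpos, ?_⟩
  · by_contra hab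
    push_neg at hab
    obtain ⟨ha0, hb0⟩ := hab
    apply hv0
    ext i
    have hwi : w i = 0 := by
      apply Complex.ext
      · simpa [ha] using congrFun ha0 i
      · simpa [hb] using congrFun hb0 i
    have := hwi
    rw [hw] at this
    have hdne : (d i : ℂ) ≠ 0 := by
      simpa using (hd i).ne'
    simpa [hdne] using this
  · rw [← hre, hT, Complex.ofReal_re]

/-- diagonal stability implies D-stability; diagonal semistability
implies D-semistability. -/
theorem stmt3 {n : ℕ} (A : Matrix (Fin n) (Fin n) ℝ) :
    ((∃ P, IsPosDiag P ∧ ∀ x : Fin n → ℝ, x ≠ 0 → x ⬝ᵥ (P * A + Aᵀ * P).mulVec x < 0) →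
      ∀ D, IsPosDiag D → IsStableMat (A * D)) ∧
    ((∃ P, IsPosDiag P ∧ ∀ x : Fin n → ℝ, x ⬝ᵥ (P * A + Aᵀ * P).mulVec x ≤ 0) →
      ∀ D, IsPosDiag D → IsSemistableMat (A * D)) := by
  constructor
  · rintro ⟨P, ⟨p, hp, rfl⟩, hneg⟩ D ⟨d, hd, rfl⟩ z hz
    obtain ⟨a, b, c, hab, hcpos, heq⟩ := key_aux A p d hp hd z hz
    set M := Matrix.diagonal p * A + Aᵀ * Matrix.diagonal p with hM
    have hle : ∀ x : Fin n → ℝ, x ⬝ᵥ M.mulVec x ≤ 0 := by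
      intro x
      by_cases hx : x = 0
      · simp [hx]
      · exact (hneg x hx).le
    have hlt : a ⬝ᵥ M.mulVec a + b ⬝ᵥ M.mulVec b < 0 := by
      rcases hab with h | h
      · have h1 := hneg a h; have h2 := hle b; linarith
      · have h1 := hle a; have h2 := hneg b h; linarith
    rw [heq] at hlt
    nlinarith
  · rintro ⟨P, ⟨p, hp, rfl⟩, hneg⟩ D ⟨d, hd, rfl⟩ z hz
    obtain ⟨a, b, c, hab, hcpos, heq⟩ := key_aux A p d hp hd z hz
    have hlt := add_nonpos (hneg a) (hneg b)
    rw [heq] at hlt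
    nlinarith
end

section
/- Consider a weakly reversible chemical reaction network with mass-action kinetics, i.e., the kinetic-order matrix equals the stoichiometric matrix, Ỹ = Y. Let k ∈ ℝ^E_+ and let x* ∈ Z_k be a complex-balanced equilibrium. Then the Jacobian matrix J = J(x*) is diagonally D-stable on S: for every D ∈ 𝒟₊ there exists P ∈ 𝒟₊ (namely P = diag((x*)^{−1})D) such that PJD + DJᵀP < 0 on S. In particular, J is D-stable on S and stable on S. -/
open Matrix Polynomial Filter Topology

section AuxLemmas

/-- pointwise formula for the Laplacian's action, as a sum over edges -/
lemma lap_mulVec_apply {m : ℕ} (E : Finset (Fin m × Fin m)) (k : Fin m × Fin m → ℝ)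
    (u : Fin m → ℝ) (i' : Fin m) :
    ((laplacian E k).mulVec u) i'
      = ∑ e ∈ E, k e * u e.1 *
        ((if e.2 = i' then (1:ℝ) else 0) - (if e.1 = i' then 1 else 0)) := by
  rw [Matrix.mulVec, dotProduct]
  simp only [laplacian, sub_mul, Finset.sum_sub_distrib, mul_sub]
  congr 1
  · -- off-diagonal part
    have l1 : ∑ x : Fin m, (if (x, i') ∈ E then k (x, i') else 0) * u x
        = ∑ x ∈ Finset.univ.filter (fun x => (x, i') ∈ E), k (x, i') * u x := by
      rw [Finset.sum_filter]
      refine Finset.sum_congr rfl fun x _ => ?_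
      by_cases h : (x, i') ∈ E <;> simp [h]
    have l2 : (∑ e ∈ E, k e * u e.1 * if e.2 = i' then (1:ℝ) else 0)
        = ∑ e ∈ E.filter (fun e => e.2 = i'), k e * u e.1 := by
      rw [Finset.sum_filter]
      refine Finset.sum_congr rfl fun e _ => ?_
      by_cases h : e.2 = i' <;> simp [h]
    rw [l1, l2]
    refine Finset.sum_nbij' (i := fun x => (x, i')) (j := fun e => e.1)
      ?_ ?_ ?_ ?_ ?_
    · intro x hx
      simp only [Finset.mem_filter, Finset.mem_univ] at hx ⊢
      exact ⟨hx.2, trivial⟩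
    · intro e he
      simp only [Finset.mem_filter] at he ⊢
      refine ⟨Finset.mem_univ _, ?_⟩
      have : (e.1, i') = e := by
        rw [← he.2]
      rw [this]
      exact he.1
    · intro x _; rfl
    · intro e he
      simp only [Finset.mem_filter] at he
      rw [← he.2]
    · intro x _; rfl
  · -- diagonal part
    have l1 : ∑ x : Fin m, (if i' = x then ∑ e ∈ E.filter (fun e => e.1 = x), k e else 0) * u x
        = (∑ e ∈ E.filter (fun e => e.1 = i'), k e) * u i' := by
      rw [Finset.sum_eq_single i']
      · simp
      · intro x _ hx
        simp [Ne.symm hx]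
      · intro h; exact absurd (Finset.mem_univ i') h
    have l2 : (∑ e ∈ E, k e * u e.1 * if e.1 = i' then (1:ℝ) else 0)
        = ∑ e ∈ E.filter (fun e => e.1 = i'), k e * u e.1 := by
      rw [Finset.sum_filter]
      refine Finset.sum_congr rfl fun e _ => ?_
      by_cases h : e.1 = i' <;> simp [h]
    rw [l1, l2, Finset.sum_mul]
    refine Finset.sum_congr rfl fun e he => ?_
    simp only [Finset.mem_filter] at he
    rw [he.2]

/-- The Laplacian's action factors through the incidence matrix. -/
lemma lap_mulVec_eq_incidence {m : ℕ} (E : Finset (Fin m × Fin m)) (k : Fin m × Fin m → ℝ)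
    (u : Fin m → ℝ) :
    (laplacian E k).mulVec u
      = (incidence E).mulVec (fun e => k (e : Fin m × Fin m) * u (e : Fin m × Fin m).1) := by
  funext i'
  rw [lap_mulVec_apply, Matrix.mulVec, dotProduct]
  rw [← Finset.sum_coe_sort E (fun e => k e * u e.1 *
      ((if e.2 = i' then (1:ℝ) else 0) - (if e.1 = i' then 1 else 0)))]
  refine Finset.sum_congr rfl fun e _ => ?_
  rw [incidence]
  ring

/-- Multiplying a Laplacian on the right by a diagonal matrix rescales the labels. -/
lemma lap_mul_diagonal {m : ℕ} (E : Finset (Fin m × Fin m)) (k : Fin m × Fin m → ℝ)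
    (c : Fin m → ℝ) :
    laplacian E k * Matrix.diagonal c = laplacian E (fun e => k e * c e.1) := by
  ext i' i
  rw [Matrix.mul_diagonal, laplacian, laplacian, sub_mul]
  congr 1
  · by_cases h : (i, i') ∈ E <;> simp [h]
  · by_cases h : i' = i
    · simp only [h, if_true, Finset.sum_mul]
      refine Finset.sum_congr rfl fun e he => ?_
      simp only [Finset.mem_filter] at he
      rw [he.2]
    · simp [h]

/-- quadratic form identity for a Laplacian with zero row sums -/
lemma lap_quad {m : ℕ} (E : Finset (Fin m × Fin m)) (b : Fin m × Fin m → ℝ)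
    (u : Fin m → ℝ)
    (hrow : ∀ i', (∑ e ∈ E, b e *
      ((if e.2 = i' then (1:ℝ) else 0) - (if e.1 = i' then 1 else 0))) = 0) :
    u ⬝ᵥ ((laplacian E b + (laplacian E b)ᵀ).mulVec u)
      = -∑ e ∈ E, b e * (u e.2 - u e.1)^2 := by
  set B := laplacian E b with hB
  have e2 : ∀ (e : Fin m × Fin m) (f : Fin m → ℝ),
      (∑ i', f i' * (if e.2 = i' then (1:ℝ) else 0)) = f e.2 := by
    intro e f
    rw [Finset.sum_eq_single e.2] <;> simp +contextual [eq_comm]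
  have e1 : ∀ (e : Fin m × Fin m) (f : Fin m → ℝ),
      (∑ i', f i' * (if e.1 = i' then (1:ℝ) else 0)) = f e.1 := by
    intro e f
    rw [Finset.sum_eq_single e.1] <;> simp +contextual [eq_comm]
  have hT1 : u ⬝ᵥ (B.mulVec u) = ∑ e ∈ E, b e * u e.1 * (u e.2 - u e.1) := by
    rw [dotProduct]
    calc ∑ i', u i' * (B.mulVec u) i'
        = ∑ i', ∑ e ∈ E, u i' * (b e * u e.1 *
            ((if e.2 = i' then (1:ℝ) else 0) - (if e.1 = i' then 1 else 0))) := by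
          refine Finset.sum_congr rfl fun i' _ => ?_
          rw [hB, lap_mulVec_apply, Finset.mul_sum]
      _ = ∑ e ∈ E, ∑ i', u i' * (b e * u e.1 *
            ((if e.2 = i' then (1:ℝ) else 0) - (if e.1 = i' then 1 else 0))) :=
          Finset.sum_comm
      _ = ∑ e ∈ E, b e * u e.1 * (u e.2 - u e.1) := by
          refine Finset.sum_congr rfl fun e _ => ?_
          rw [Finset.sum_congr rfl (fun i' (_ : i' ∈ Finset.univ) =>
            show u i' * (b e * u e.1 *
                ((if e.2 = i' then (1:ℝ) else 0) - (if e.1 = i' then 1 else 0)))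
              = b e * u e.1 * (u i' * (if e.2 = i' then (1:ℝ) else 0))
                - b e * u e.1 * (u i' * (if e.1 = i' then (1:ℝ) else 0)) from by ring),
            Finset.sum_sub_distrib, ← Finset.mul_sum, ← Finset.mul_sum, e2 e u, e1 e u]
          ring
  have hT2 : u ⬝ᵥ (Bᵀ.mulVec u) = u ⬝ᵥ (B.mulVec u) := by
    rw [Matrix.mulVec_transpose, dotProduct_comm, Matrix.dotProduct_mulVec]
  have hzero : (∑ e ∈ E, b e * ((u e.2)^2 - (u e.1)^2)) = 0 := by
    calc ∑ e ∈ E, b e * ((u e.2)^2 - (u e.1)^2)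
        = ∑ e ∈ E, ∑ i', (u i')^2 * (b e *
            ((if e.2 = i' then (1:ℝ) else 0) - (if e.1 = i' then 1 else 0))) := by
          refine Finset.sum_congr rfl fun e _ => ?_
          rw [Finset.sum_congr rfl (fun i' (_ : i' ∈ Finset.univ) =>
            show (u i')^2 * (b e *
                ((if e.2 = i' then (1:ℝ) else 0) - (if e.1 = i' then 1 else 0)))
              = b e * ((u i')^2 * (if e.2 = i' then (1:ℝ) else 0))
                - b e * ((u i')^2 * (if e.1 = i' then (1:ℝ) else 0)) from by ring),
            Finset.sum_sub_distrib, ← Finset.mul_sum, ← Finset.mul_sum,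
            e2 e (fun i => (u i)^2), e1 e (fun i => (u i)^2)]
          ring
      _ = ∑ i', ∑ e ∈ E, (u i')^2 * (b e *
            ((if e.2 = i' then (1:ℝ) else 0) - (if e.1 = i' then 1 else 0))) :=
          Finset.sum_comm
      _ = 0 := by
          refine Finset.sum_eq_zero fun i' _ => ?_
          rw [← Finset.mul_sum, hrow i', mul_zero]
  rw [Matrix.add_mulVec, dotProduct_add, hT1, hT2, hT1]
  have key : ∀ e ∈ E, b e * u e.1 * (u e.2 - u e.1) + b e * u e.1 * (u e.2 - u e.1)
      = -(b e * (u e.2 - u e.1)^2) + b e * ((u e.2)^2 - (u e.1)^2) := by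
    intro e _; ring
  rw [← Finset.sum_add_distrib, Finset.sum_congr rfl key, Finset.sum_add_distrib,
    hzero, add_zero, ← Finset.sum_neg_distrib]

lemma eig_of_root {d : ℕ} (M : Matrix (Fin d) (Fin d) ℝ) (z : ℂ)
    (hz : (M.charpoly.map (algebraMap ℝ ℂ)).IsRoot z) :
    ∃ w : Fin d → ℂ, w ≠ 0 ∧ (M.map (algebraMap ℝ ℂ)).mulVec w = z • w := by
  rw [← Matrix.charpoly_map] at hz
  set Mc := M.map (algebraMap ℝ ℂ)
  have hdet : (Matrix.diagonal (fun _ : Fin d => z) - Mc).det = 0 := by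
    have h1 : Polynomial.eval z Mc.charpoly
        = (Matrix.diagonal (fun _ : Fin d => z) - Mc).det := by
      rw [Matrix.charpoly, ← Polynomial.coe_evalRingHom, RingHom.map_det]
      congr 1
      ext i j
      by_cases h : i = j <;>
        simp [h, Matrix.charmatrix_apply, Matrix.diagonal_apply]
    rw [← h1]; exact hz
  obtain ⟨w, hw0, hw⟩ := (Matrix.exists_mulVec_eq_zero_iff).mpr hdet
  refine ⟨w, hw0, ?_⟩
  rw [Matrix.sub_mulVec] at hw
  have h2 : (Matrix.diagonal (fun _ : Fin d => z)).mulVec w = z • w := by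
    ext i; simp [Matrix.mulVec_diagonal, Pi.smul_apply, smul_eq_mul]
  rw [h2, sub_eq_zero] at hw
  exact hw.symm

/-- The Lyapunov criterion. -/
lemma lyapunov {n : ℕ} (A : Matrix (Fin n) (Fin n) ℝ) (S : Submodule ℝ (Fin n → ℝ))
    (hA : ∀ v, A.mulVec v ∈ S) (p : Fin n → ℝ) (hp : ∀ i, 0 < p i)
    (hN : NegDefOn (Matrix.diagonal p * A + Aᵀ * Matrix.diagonal p) S) :
    IsStableOn A S := by
  refine ⟨hA, ?_⟩
  intro z hz
  set L := restrictedMap A S hA with hL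
  -- choose a basis of S
  let b : Module.Basis (Fin (Module.finrank ℝ S)) ℝ S := Module.finBasis ℝ S
  have hcp : L.charpoly = (LinearMap.toMatrix b b L).charpoly :=
    (LinearMap.charpoly_toMatrix L b).symm
  rw [hcp] at hz
  obtain ⟨w, hw0, hw⟩ := eig_of_root _ z hz
  set M := LinearMap.toMatrix b b L with hM
  -- lift eigenvector to ℂ^n
  set u : Fin n → ℂ := fun i => ∑ j, w j * ((b j : Fin n → ℝ) i : ℂ) with hu
  -- A acts on basis vectors through M
  have hbasis : ∀ j, A.mulVec (b j : Fin n → ℝ) = ∑ i, M i j • ((b i : Fin n → ℝ)) := by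
    intro j
    have h1 : (L (b j) : Fin n → ℝ) = A.mulVec (b j) := rfl
    have h2 : L (b j) = ∑ i, M i j • b i := by
      conv_lhs => rw [← Module.Basis.sum_repr b (L (b j))]
      refine Finset.sum_congr rfl fun i _ => ?_
      congr 1
      rw [hM, LinearMap.toMatrix_apply]
    calc A.mulVec (b j) = (L (b j) : Fin n → ℝ) := rfl
    _ = ((∑ i, M i j • b i : S) : Fin n → ℝ) := by rw [h2]
    _ = ∑ i, M i j • ((b i : Fin n → ℝ)) := by
        push_cast [Submodule.coe_sum]
        simp
  -- eigen-relation for the lifted vector u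
  have hweq : ∀ i', (∑ j, (M i' j : ℂ) * w j) = z * w i' := by
    intro i'
    have := congrFun hw i'
    simpa [Matrix.mulVec, dotProduct, Matrix.map_apply, Pi.smul_apply,
      smul_eq_mul] using this
  have hAu : ∀ i, (∑ l, (A i l : ℂ) * u l) = z * u i := by
    intro i
    calc ∑ l, (A i l : ℂ) * u l
        = ∑ l, ∑ j, w j * ((A i l : ℂ) * ((b j : Fin n → ℝ) l : ℂ)) := by
          refine Finset.sum_congr rfl fun l _ => ?_
          rw [hu, Finset.mul_sum]
          refine Finset.sum_congr rfl fun j _ => by ring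
      _ = ∑ j, w j * (∑ l, (A i l : ℂ) * ((b j : Fin n → ℝ) l : ℂ)) := by
          rw [Finset.sum_comm]
          refine Finset.sum_congr rfl fun j _ => by rw [Finset.mul_sum]
      _ = ∑ j, w j * ((A.mulVec (b j : Fin n → ℝ) i : ℝ) : ℂ) := by
          refine Finset.sum_congr rfl fun j _ => ?_
          congr 1
          rw [Matrix.mulVec, dotProduct]
          push_cast
          rfl
      _ = ∑ j, w j * (∑ i', (M i' j : ℂ) * ((b i' : Fin n → ℝ) i : ℂ)) := by
          refine Finset.sum_congr rfl fun j _ => ?_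
          congr 1
          rw [hbasis j]
          push_cast [Finset.sum_apply, Pi.smul_apply, smul_eq_mul]
          rfl
      _ = ∑ i', (∑ j, (M i' j : ℂ) * w j) * ((b i' : Fin n → ℝ) i : ℂ) := by
          have hd : (∑ j, w j * (∑ i', (M i' j : ℂ) * ((b i' : Fin n → ℝ) i : ℂ)))
              = ∑ j, ∑ i', w j * ((M i' j : ℂ) * ((b i' : Fin n → ℝ) i : ℂ)) :=
            Finset.sum_congr rfl fun j _ => Finset.mul_sum _ _ _
          rw [hd, Finset.sum_comm]
          refine Finset.sum_congr rfl fun i' _ => ?_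
          rw [Finset.sum_mul]
          refine Finset.sum_congr rfl fun j _ => by ring
      _ = z * u i := by
          rw [hu, Finset.mul_sum]
          refine Finset.sum_congr rfl fun i' _ => ?_
          rw [hweq i']
          ring
  -- real and imaginary parts of u
  set va : Fin n → ℝ := fun i => (u i).re with hva
  set vb : Fin n → ℝ := fun i => (u i).im with hvb
  have hvaS : va ∈ S := by
    have : va = ((∑ j, (w j).re • b j : S) : Fin n → ℝ) := by
      funext i
      push_cast [Submodule.coe_sum]
      simp only [Finset.sum_apply, Pi.smul_apply, smul_eq_mul]
      rw [hva]
      simp only [hu, Complex.re_sum]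
      refine Finset.sum_congr rfl fun j _ => ?_
      simp [Complex.mul_re]
    rw [this]; exact (∑ j, (w j).re • b j : S).2
  have hvbS : vb ∈ S := by
    have : vb = ((∑ j, (w j).im • b j : S) : Fin n → ℝ) := by
      funext i
      push_cast [Submodule.coe_sum]
      simp only [Finset.sum_apply, Pi.smul_apply, smul_eq_mul]
      rw [hvb]
      simp only [hu, Complex.im_sum]
      refine Finset.sum_congr rfl fun j _ => ?_
      simp [Complex.mul_im]
    rw [this]; exact (∑ j, (w j).im • b j : S).2
  -- u ≠ 0
  have hu0 : u ≠ 0 := by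
    intro h
    apply hw0
    have hre : (∑ j, (w j).re • b j : S) = 0 := by
      apply Subtype.ext
      push_cast [Submodule.coe_sum]
      funext i
      simp only [Finset.sum_apply, Pi.smul_apply, smul_eq_mul]
      have : (u i).re = 0 := by rw [h]; rfl
      rw [hu] at this
      simpa [Complex.re_sum, Complex.mul_re] using this
    have him : (∑ j, (w j).im • b j : S) = 0 := by
      apply Subtype.ext
      push_cast [Submodule.coe_sum]
      funext i
      simp only [Finset.sum_apply, Pi.smul_apply, smul_eq_mul]
      have : (u i).im = 0 := by rw [h]; rfl
      rw [hu] at this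
      simpa [Complex.im_sum, Complex.mul_im] using this
    have hli := b.linearIndependent
    rw [Fintype.linearIndependent_iff] at hli
    funext j
    have h1 := hli _ hre j
    have h2 := hli _ him j
    exact Complex.ext h1 h2
  -- the quadratic form
  set N : Matrix (Fin n) (Fin n) ℝ := Matrix.diagonal p * A + Aᵀ * Matrix.diagonal p with hNdef
  have hNij : ∀ i j, N i j = p i * A i j + A j i * p j := by
    intro i j
    rw [hNdef]
    simp [Matrix.mul_apply, Matrix.diagonal, Finset.sum_ite_eq, Finset.sum_ite_eq',
      Matrix.transpose_apply, Matrix.add_apply]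
  set Q : ℂ := ∑ i, ∑ j, (starRingEnd ℂ) (u i) * (N i j : ℂ) * u j with hQ
  -- conjugate eigen-relation
  have hAuc : ∀ i, (∑ l, (A i l : ℂ) * (starRingEnd ℂ) (u l))
      = (starRingEnd ℂ) z * (starRingEnd ℂ) (u i) := by
    intro i
    have := congrArg (starRingEnd ℂ) (hAu i)
    simpa [map_sum, _root_.map_mul, Complex.conj_ofReal] using this
  set sR : ℝ := ∑ i, p i * Complex.normSq (u i) with hsR
  have hsRpos : 0 < sR := by
    have hne : ∃ i, u i ≠ 0 := by
      by_contra h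
      push_neg at h
      exact hu0 (funext h)
    obtain ⟨i0, hi0⟩ := hne
    refine Finset.sum_pos' (fun i _ => mul_nonneg (hp i).le (Complex.normSq_nonneg _)) ?_
    exact ⟨i0, Finset.mem_univ _, mul_pos (hp i0) (Complex.normSq_pos.mpr hi0)⟩
  have hQ1 : Q = (z + (starRingEnd ℂ) z) * (sR : ℂ) := by
    rw [hQ]
    have hthis : ∀ i, ∑ j, (starRingEnd ℂ) (u i) * (N i j : ℂ) * u j
        = (starRingEnd ℂ) (u i) * p i * (∑ j, (A i j : ℂ) * u j)
          + ∑ j, (A j i : ℂ) * p j * ((starRingEnd ℂ) (u i) * u j) := by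
      intro i
      rw [Finset.mul_sum, ← Finset.sum_add_distrib]
      refine Finset.sum_congr rfl fun j _ => ?_
      rw [hNij]
      push_cast
      ring
    calc ∑ i, ∑ j, (starRingEnd ℂ) (u i) * (N i j : ℂ) * u j
        = ∑ i, ((starRingEnd ℂ) (u i) * p i * (∑ j, (A i j : ℂ) * u j))
          + ∑ i, ∑ j, (A j i : ℂ) * p j * ((starRingEnd ℂ) (u i) * u j) := by
          rw [← Finset.sum_add_distrib]
          exact Finset.sum_congr rfl fun i _ => hthis i
      _ = ∑ i, ((starRingEnd ℂ) (u i) * p i * (z * u i))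
          + ∑ j, p j * u j * (∑ i, (A j i : ℂ) * (starRingEnd ℂ) (u i)) := by
          congr 1
          · exact Finset.sum_congr rfl fun i _ => by rw [hAu i]
          · rw [Finset.sum_comm]
            refine Finset.sum_congr rfl fun j _ => ?_
            rw [Finset.mul_sum]
            refine Finset.sum_congr rfl fun i _ => by ring
      _ = (z + (starRingEnd ℂ) z) * (sR : ℂ) := by
          rw [hsR]
          push_cast
          rw [Finset.mul_sum, ← Finset.sum_add_distrib]
          refine Finset.sum_congr rfl fun i _ => ?_
          rw [hAuc i]
          have hnc : ((Complex.normSq (u i) : ℝ) : ℂ) = (starRingEnd ℂ) (u i) * u i := by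
            rw [mul_comm]
            exact (Complex.mul_conj (u i)).symm
          rw [hnc]
          ring
  have hQre1 : Q.re = 2 * z.re * sR := by
    rw [hQ1]
    have : z + (starRingEnd ℂ) z = ((2 * z.re : ℝ) : ℂ) := by
      rw [Complex.add_conj]
    rw [this, ← Complex.ofReal_mul]
    simp
  have hQre2 : Q.re = va ⬝ᵥ N.mulVec va + vb ⬝ᵥ N.mulVec vb := by
    have hterm : ∀ i j, ((starRingEnd ℂ) (u i) * (N i j : ℂ) * u j).re
        = N i j * (va i * va j) + N i j * (vb i * vb j) := by
      intro i j
      simp only [Complex.mul_re, Complex.mul_im, Complex.conj_re, Complex.conj_im,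
        Complex.ofReal_re, Complex.ofReal_im, hva, hvb]
      ring
    rw [hQ, Complex.re_sum]
    simp only [Complex.re_sum, hterm]
    rw [dotProduct, dotProduct, ← Finset.sum_add_distrib]
    refine Finset.sum_congr rfl fun i _ => ?_
    rw [Finset.sum_add_distrib]
    congr 1
    · rw [Matrix.mulVec, dotProduct, Finset.mul_sum]
      exact Finset.sum_congr rfl fun j _ => by ring
    · rw [Matrix.mulVec, dotProduct, Finset.mul_sum]
      exact Finset.sum_congr rfl fun j _ => by ring
  have hsum_lt : va ⬝ᵥ N.mulVec va + vb ⬝ᵥ N.mulVec vb < 0 := by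
    have huv : va ≠ 0 ∨ vb ≠ 0 := by
      by_contra h
      push_neg at h
      apply hu0
      funext i
      have h1 : (u i).re = 0 := by
        have := congrFun h.1 i; simpa [hva] using this
      have h2 : (u i).im = 0 := by
        have := congrFun h.2 i; simpa [hvb] using this
      exact Complex.ext h1 h2
    have ha : va ≠ 0 → va ⬝ᵥ N.mulVec va < 0 := fun h0 => hN va hvaS h0
    have hb : vb ≠ 0 → vb ⬝ᵥ N.mulVec vb < 0 := fun h0 => hN vb hvbS h0
    rcases huv with h0 | h0
    · rcases eq_or_ne vb 0 with h1 | h1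
      · have : vb ⬝ᵥ N.mulVec vb = 0 := by rw [h1]; simp
        linarith [ha h0]
      · linarith [ha h0, hb h1]
    · rcases eq_or_ne va 0 with h1 | h1
      · have : va ⬝ᵥ N.mulVec va = 0 := by rw [h1]; simp
        linarith [hb h0]
      · linarith [hb h0, ha h1]
  rw [hQre2] at hQre1
  nlinarith [hsRpos, hsum_lt]

end AuxLemmas

/-- for a weakly reversible mass-action system (`Ỹ = Y`), the Jacobian at any
complex-balanced equilibrium is diagonally D-stable on `S`; in particular it is D-stable on `S`
and stable on `S`. -/
theorem stmt6 {n m : ℕ} (E : Finset (Fin m × Fin m)) (hE : ∀ e ∈ E, e.1 ≠ e.2)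
    (hwr : WeaklyReversible E) (Y : Matrix (Fin n) (Fin m) ℝ)
    (k : Fin m × Fin m → ℝ) (hk : ∀ e ∈ E, 0 < k e)
    (x : Fin n → ℝ) (hx : ∀ i, 0 < x i)
    (hcb : (laplacian E k).mulVec (powVec x Y) = 0) :
    (∀ D, IsPosDiag D → ∃ P, IsPosDiag P ∧
      NegDefOn (P * jacobianMat E k Y Y x * D + D * (jacobianMat E k Y Y x)ᵀ * P)
        (stoichSubspace Y E)) ∧
    (∀ D, IsPosDiag D → IsStableOn (jacobianMat E k Y Y x * D) (stoichSubspace Y E)) ∧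
    IsStableOn (jacobianMat E k Y Y x) (stoichSubspace Y E) := by
    classical
  set S := stoichSubspace Y E with hS
  set c : Fin m → ℝ := powVec x Y with hc
  have hcpos : ∀ j, 0 < c j := by
    intro j
    refine Finset.prod_pos fun i _ => ?_
    exact Real.rpow_pos_of_pos (hx i) _
  set b : Fin m × Fin m → ℝ := fun e => k e * c e.1 with hb
  have hbpos : ∀ e ∈ E, 0 < b e := fun e he => mul_pos (hk e he) (hcpos e.1)
  have hBdiag : laplacian E k * Matrix.diagonal c = laplacian E b :=
    lap_mul_diagonal E k c
  have hrow : ∀ i', (∑ e ∈ E, b e *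
      ((if e.2 = i' then (1:ℝ) else 0) - (if e.1 = i' then 1 else 0))) = 0 := by
    intro i'
    have h := congrFun hcb i'
    rw [lap_mulVec_apply] at h
    simpa [hb] using h
  -- range fact
  have hmem : ∀ (Bm : Matrix (Fin m) (Fin n) ℝ) (v : Fin n → ℝ),
      (Y * laplacian E k * Bm).mulVec v ∈ S := by
    intro Bm v
    have h1 : (Y * laplacian E k * Bm).mulVec v
        = Y.mulVec ((laplacian E k).mulVec (Bm.mulVec v)) := by
      rw [← Matrix.mulVec_mulVec, ← Matrix.mulVec_mulVec]
    rw [h1, lap_mulVec_eq_incidence, Matrix.mulVec_mulVec]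
    exact ⟨_, rfl⟩
  -- J in factored, action form
  set J := jacobianMat E k Y Y x with hJ
  have hJv : ∀ y : Fin n → ℝ, J.mulVec y
      = Y.mulVec ((laplacian E b).mulVec (Yᵀ.mulVec
          ((Matrix.diagonal (fun i => (x i)⁻¹)).mulVec y))) := by
    intro y
    rw [hJ, jacobianMat, ← Matrix.mulVec_mulVec, ← Matrix.mulVec_mulVec,
      ← Matrix.mulVec_mulVec, ← Matrix.mulVec_mulVec,
      Matrix.mulVec_mulVec _ (laplacian E k) (Matrix.diagonal c), hBdiag]
  -- the main quadratic estimate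
  have main : ∀ d : Fin n → ℝ, (∀ i, 0 < d i) →
      NegDefOn (Matrix.diagonal (fun i => (x i)⁻¹ * d i) * J * Matrix.diagonal d
        + Matrix.diagonal d * Jᵀ * Matrix.diagonal (fun i => (x i)⁻¹ * d i)) S := by
    intro d hd
    set p : Fin n → ℝ := fun i => (x i)⁻¹ * d i with hp
    have hppos : ∀ i, 0 < p i := fun i => mul_pos (inv_pos.mpr (hx i)) (hd i)
    intro v hv hv0
    set w : Fin n → ℝ := fun i => p i * v i with hwdef
    set u : Fin m → ℝ := Yᵀ.mulVec w with hu
    have hPv : (Matrix.diagonal p).mulVec v = w := by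
      funext i
      rw [Matrix.mulVec_diagonal]
    have hXDv : (Matrix.diagonal (fun i => (x i)⁻¹)).mulVec
        ((Matrix.diagonal d).mulVec v) = w := by
      funext i
      rw [Matrix.mulVec_diagonal, Matrix.mulVec_diagonal]
      show (x i)⁻¹ * (d i * v i) = p i * v i
      rw [hp]; ring
    -- z is the common middle vector
    have hz : J.mulVec ((Matrix.diagonal d).mulVec v)
        = Y.mulVec ((laplacian E b).mulVec u) := by
      rw [hJv, hXDv, hu]
    have hterm1 : v ⬝ᵥ ((Matrix.diagonal p * J * Matrix.diagonal d).mulVec v)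
        = u ⬝ᵥ ((laplacian E b).mulVec u) := by
      rw [← Matrix.mulVec_mulVec, ← Matrix.mulVec_mulVec,
        Matrix.dotProduct_mulVec v (Matrix.diagonal p), ← Matrix.mulVec_transpose,
        Matrix.diagonal_transpose, hPv, hz,
        Matrix.dotProduct_mulVec w Y, ← Matrix.mulVec_transpose, ← hu]
    have hterm2 : v ⬝ᵥ ((Matrix.diagonal d * Jᵀ * Matrix.diagonal p).mulVec v)
        = u ⬝ᵥ ((laplacian E b)ᵀ.mulVec u) := by
      rw [← Matrix.mulVec_mulVec, ← Matrix.mulVec_mulVec,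
        Matrix.dotProduct_mulVec v (Matrix.diagonal d), ← Matrix.mulVec_transpose,
        Matrix.diagonal_transpose, hPv, Matrix.dotProduct_mulVec _ Jᵀ,
        Matrix.vecMul_transpose, hz]
      -- goal : (Y *ᵥ (lap *ᵥ u)) ⬝ᵥ w = u ⬝ᵥ (lapᵀ *ᵥ u)
      rw [dotProduct_comm, Matrix.dotProduct_mulVec w Y,
        ← Matrix.mulVec_transpose, ← hu, Matrix.dotProduct_mulVec u,
        Matrix.mulVec_transpose, dotProduct_comm]
    have hquad : v ⬝ᵥ ((Matrix.diagonal p * J * Matrix.diagonal d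
          + Matrix.diagonal d * Jᵀ * Matrix.diagonal p).mulVec v)
        = -∑ e ∈ E, b e * (u e.2 - u e.1)^2 := by
      rw [Matrix.add_mulVec, dotProduct_add, hterm1, hterm2,
        ← lap_quad E b u hrow, Matrix.add_mulVec, dotProduct_add]
    rw [hquad]
    -- strict positivity of v ⬝ᵥ w
    have hvw : 0 < v ⬝ᵥ w := by
      have hform : v ⬝ᵥ w = ∑ i, p i * (v i)^2 := by
        rw [dotProduct]
        refine Finset.sum_congr rfl fun i _ => ?_
        rw [hwdef]
        ring
      rw [hform]
      obtain ⟨i0, hi0⟩ := Function.ne_iff.mp hv0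
      refine Finset.sum_pos' (fun i _ => mul_nonneg (hppos i).le (sq_nonneg _)) ?_
      refine ⟨i0, Finset.mem_univ _, mul_pos (hppos i0) ?_⟩
      have : v i0 ≠ 0 := hi0
      positivity
    -- the differences cannot all vanish
    have hex : ∃ e ∈ E, u e.2 - u e.1 ≠ 0 := by
      by_contra hcontra
      push_neg at hcontra
      obtain ⟨t, ht⟩ := hv
      rw [Matrix.mulVecLin_apply] at ht
      have hvw0 : v ⬝ᵥ w = 0 := by
        rw [← ht, dotProduct_comm, Matrix.dotProduct_mulVec,
          ← Matrix.mulVec_transpose, Matrix.transpose_mul, ← Matrix.mulVec_mulVec, ← hu]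
        have hzz : (incidence E)ᵀ.mulVec u = 0 := by
          funext e
          rw [Matrix.mulVec, dotProduct]
          have hsummand : ∀ i, (incidence E)ᵀ e i * u i
              = u i * (if (e : Fin m × Fin m).2 = i then (1:ℝ) else 0)
                - u i * (if (e : Fin m × Fin m).1 = i then (1:ℝ) else 0) := by
            intro i
            rw [Matrix.transpose_apply, incidence]
            ring
          rw [Finset.sum_congr rfl (fun i _ => hsummand i), Finset.sum_sub_distrib]
          have e2 : (∑ i, u i * (if (e : Fin m × Fin m).2 = i then (1:ℝ) else 0))
              = u (e : Fin m × Fin m).2 := by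
            rw [Finset.sum_eq_single (e : Fin m × Fin m).2] <;>
              simp +contextual [eq_comm]
          have e1 : (∑ i, u i * (if (e : Fin m × Fin m).1 = i then (1:ℝ) else 0))
              = u (e : Fin m × Fin m).1 := by
            rw [Finset.sum_eq_single (e : Fin m × Fin m).1] <;>
              simp +contextual [eq_comm]
          rw [e1, e2]
          have := hcontra (e : Fin m × Fin m) e.2
          simpa [Pi.zero_apply] using this
        rw [hzz]
        simp
      exact absurd hvw0 (ne_of_gt hvw)
    obtain ⟨e0, he0, hne0⟩ := hex
    have hsumpos : 0 < ∑ e ∈ E, b e * (u e.2 - u e.1)^2 := by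
      refine Finset.sum_pos' (fun e he => mul_nonneg (hbpos e he).le (sq_nonneg _)) ?_
      exact ⟨e0, he0, mul_pos (hbpos e0 he0) (by positivity)⟩
    linarith
  -- membership for J * diagonal d
  have hJm : ∀ (d : Fin n → ℝ) (v : Fin n → ℝ),
      (J * Matrix.diagonal d).mulVec v ∈ S := by
    intro d v
    rw [← Matrix.mulVec_mulVec, hJv, lap_mulVec_eq_incidence, Matrix.mulVec_mulVec]
    exact ⟨_, rfl⟩
  -- the three statements
  have part2 : ∀ D, IsPosDiag D → IsStableOn (J * D) S := by
    rintro D ⟨d, hd, rfl⟩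
    have hppos : ∀ i, 0 < (x i)⁻¹ * d i := fun i => mul_pos (inv_pos.mpr (hx i)) (hd i)
    refine lyapunov _ _ (hJm d) (fun i => (x i)⁻¹ * d i) hppos ?_
    have heq : Matrix.diagonal (fun i => (x i)⁻¹ * d i) * (J * Matrix.diagonal d)
          + (J * Matrix.diagonal d)ᵀ * Matrix.diagonal (fun i => (x i)⁻¹ * d i)
        = Matrix.diagonal (fun i => (x i)⁻¹ * d i) * J * Matrix.diagonal d
          + Matrix.diagonal d * Jᵀ * Matrix.diagonal (fun i => (x i)⁻¹ * d i) := by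
      rw [Matrix.transpose_mul, Matrix.diagonal_transpose, ← Matrix.mul_assoc]
    rw [heq]
    exact main d hd
  refine ⟨?_, part2, ?_⟩
  · rintro D ⟨d, hd, rfl⟩
    exact ⟨Matrix.diagonal (fun i => (x i)⁻¹ * d i),
      ⟨fun i => (x i)⁻¹ * d i, fun i => mul_pos (inv_pos.mpr (hx i)) (hd i), rfl⟩,
      main d hd⟩
  · have h1 : IsPosDiag (1 : Matrix (Fin n) (Fin n) ℝ) :=
      ⟨fun _ => 1, fun _ => one_pos, (Matrix.diagonal_one).symm⟩
    have := part2 1 h1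
    rwa [mul_one] at this
end

section
/- Consider a weakly reversible generalized chemical reaction network (G weakly reversible, Y, Ỹ ∈ ℝ^{n×V}), and let x* ∈ ℝ^n_+. Then there exist edge labels k ∈ ℝ^E_+ such that A_k (x*)^Ỹ = 0, i.e., x* ∈ Z_k. -/
open Matrix Polynomial Filter Topology

/-!
Weak reversibility puts every edge `i → i'` on a directed cycle (the edge followed by a directed
path back from `i'` to `i`), and summing these cycles gives a circulation `c` on `E`, i.e.
`I_E c = 0`, that is positive on every edge. Since `A_k v = I_E (k_e v_{source e})_e`, the labels
`k_e = c_e / (x^Ỹ)_{source e}` give `A_k x^Ỹ = I_E c = 0`.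
-/

section

variable {m : ℕ} (E : Finset (Fin m × Fin m))

theorem incidence_mulVec_single_one (e : E) :
    incidence E *ᵥ Pi.single e 1 = Pi.single e.1.2 1 - Pi.single e.1.1 1 := by
  ext i
  simp [incidence, Pi.single_apply, eq_comm]

theorem exists_nonneg_flow_of_reflTransGen {a b : Fin m}
    (h : Relation.ReflTransGen (fun u v => (u, v) ∈ E) a b) :
    ∃ f : E → ℝ, 0 ≤ f ∧ incidence E *ᵥ f = Pi.single b 1 - Pi.single a 1 := by
  induction h with
  | refl => exact ⟨0, le_rfl, by simp⟩
  | @tail q r _ hqr ih =>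
    obtain ⟨f, hf_nonneg, hf_flow⟩ := ih
    refine ⟨f + Pi.single ⟨(q, r), hqr⟩ 1,
      add_nonneg hf_nonneg (Pi.single_nonneg.mpr zero_le_one), ?_⟩
    rw [mulVec_add, hf_flow, incidence_mulVec_single_one]
    abel

variable {E}

theorem exists_nonneg_circulation_pos_at (hwr : WeaklyReversible E) (e : E) :
    ∃ f : E → ℝ, 0 ≤ f ∧ 0 < f e ∧ incidence E *ᵥ f = 0 := by
  have hback : Relation.ReflTransGen (fun u v => (u, v) ∈ E) e.1.2 e.1.1 :=
    hwr _ _ (.single (Or.inr e.2))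
  obtain ⟨f, hf_nonneg, hf_flow⟩ := exists_nonneg_flow_of_reflTransGen E hback
  refine ⟨f + Pi.single e 1, add_nonneg hf_nonneg (Pi.single_nonneg.mpr zero_le_one), ?_, ?_⟩
  · simpa using add_pos_of_nonneg_of_pos (hf_nonneg e) one_pos
  · rw [mulVec_add, hf_flow, incidence_mulVec_single_one]
    abel

theorem exists_pos_circulation (hwr : WeaklyReversible E) :
    ∃ f : E → ℝ, (∀ e, 0 < f e) ∧ incidence E *ᵥ f = 0 := by
  choose g hg_nonneg hg_pos hg_circ using exists_nonneg_circulation_pos_at hwr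
  refine ⟨∑ e, g e, fun e => ?_, by simp [mulVec_sum, hg_circ]⟩
  rw [Finset.sum_apply]
  exact (hg_pos e).trans_le
    (Finset.single_le_sum (fun e' _ => hg_nonneg e' e) (Finset.mem_univ e))

variable (E)

theorem laplacian_mulVec (k : Fin m × Fin m → ℝ) (p : Fin m → ℝ) :
    laplacian E k *ᵥ p = incidence E *ᵥ fun e => k e * p e.1.1 := by
  ext v
  have inflow : ∑ i, (if (i, v) ∈ E then k (i, v) * p i else 0)
      = ∑ e : E, if e.1.2 = v then k e * p e.1.1 else 0 := by
    rw [Finset.sum_coe_sort E (fun e => if e.2 = v then k e * p e.1 else 0), ← Finset.sum_filter,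
      ← Finset.sum_filter]
    apply Finset.sum_nbij' (fun i => (i, v)) Prod.fst <;> aesop
  have outflow : ∑ i, (if v = i then (∑ e ∈ E with e.1 = i, k e) * p i else 0)
      = ∑ e : E, if e.1.1 = v then k e * p e.1.1 else 0 := by
    rw [Fintype.sum_ite_eq, Finset.sum_coe_sort E (fun e => if e.1 = v then k e * p e.1 else 0),
      ← Finset.sum_filter, Finset.sum_mul]
    exact Finset.sum_congr rfl fun e he => by rw [(Finset.mem_filter.mp he).2]
  simp only [mulVec, dotProduct, laplacian, incidence, sub_mul, Finset.sum_sub_distrib,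
    ite_mul, one_mul, zero_mul, inflow, outflow]

end

theorem powVec_pos {n m : ℕ} {x : Fin n → ℝ} (hx : ∀ i, 0 < x i) (Yt : Matrix (Fin n) (Fin m) ℝ)
    (j : Fin m) : 0 < powVec x Yt j :=
  Finset.prod_pos fun i _ => Real.rpow_pos_of_pos (hx i) _

theorem stmt7_general {n m : ℕ} (E : Finset (Fin m × Fin m))
    (hwr : WeaklyReversible E) (Yt : Matrix (Fin n) (Fin m) ℝ)
    (x : Fin n → ℝ) (hx : ∀ i, 0 < x i) :
    ∃ k : Fin m × Fin m → ℝ, (∀ e ∈ E, 0 < k e) ∧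
      (laplacian E k).mulVec (powVec x Yt) = 0 := by
  obtain ⟨c, hc_pos, hc_circ⟩ := exists_pos_circulation hwr
  have hp := powVec_pos hx Yt
  refine ⟨fun e => if h : e ∈ E then c ⟨e, h⟩ / powVec x Yt e.1 else 0,
    fun e he => by simpa [he] using div_pos (hc_pos _) (hp _), ?_⟩
  rw [laplacian_mulVec]
  convert hc_circ using 2
  funext e
  simp [e.2, div_mul_cancel₀ _ (hp _).ne']

/-- for a weakly reversible network, every positive vector is a
complex-balanced equilibrium for some rate constants. -/
theorem stmt7 {n m : ℕ} (E : Finset (Fin m × Fin m)) (hE : ∀ e ∈ E, e.1 ≠ e.2)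
    (hwr : WeaklyReversible E) (Yt : Matrix (Fin n) (Fin m) ℝ)
    (x : Fin n → ℝ) (hx : ∀ i, 0 < x i) :
    ∃ k : Fin m × Fin m → ℝ, (∀ e ∈ E, 0 < k e) ∧
      (laplacian E k).mulVec (powVec x Yt) = 0 :=
  stmt7_general E hwr Yt x hx
end

section
/- Consider a weakly reversible generalized chemical reaction network, let k ∈ ℝ^E_+, and let x* ∈ Z_k. Then ker(A_k diag((x*)^Ỹ)) = ker(I_Eᵀ), i.e., the kernel of A_k diag((x*)^Ỹ) consists exactly of the vectors in ℝ^V that are constant on each connected component of G. -/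
open Matrix Polynomial Filter Topology

lemma lap_apply {m : ℕ} (E : Finset (Fin m × Fin m)) (k : Fin m × Fin m → ℝ)
    (w : Fin m → ℝ) (c : Fin m) :
    (laplacian E k).mulVec w c
      = (∑ i, if (i, c) ∈ E then k (i, c) * w i else 0)
        - (∑ e ∈ E.filter (fun e => e.1 = c), k e) * w c := by
  simp [laplacian, Matrix.mulVec, dotProduct, sub_mul, Finset.sum_sub_distrib,
    ite_mul, Finset.sum_ite_eq]

lemma incT_apply {m : ℕ} (E : Finset (Fin m × Fin m)) (v : Fin m → ℝ)
    (e : {e : Fin m × Fin m // e ∈ E}) :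
    ((incidence E)ᵀ).mulVec v e = v (e : Fin m × Fin m).2 - v (e : Fin m × Fin m).1 := by
  simp [incidence, Matrix.mulVec, dotProduct, sub_mul, Finset.sum_sub_distrib,
    Finset.sum_ite_eq]

/-- `ker (A_k diag((x*)^Ỹ)) = ker (I_Eᵀ)` at a complex-balanced equilibrium. -/
theorem stmt8 {n m : ℕ} (E : Finset (Fin m × Fin m)) (hE : ∀ e ∈ E, e.1 ≠ e.2)
    (hwr : WeaklyReversible E) (Yt : Matrix (Fin n) (Fin m) ℝ)
    (k : Fin m × Fin m → ℝ) (hk : ∀ e ∈ E, 0 < k e)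
    (x : Fin n → ℝ) (hx : ∀ i, 0 < x i)
    (hcb : (laplacian E k).mulVec (powVec x Yt) = 0) :
    LinearMap.ker (laplacian E k * Matrix.diagonal (powVec x Yt)).mulVecLin =
      LinearMap.ker ((incidence E)ᵀ).mulVecLin := by
  classical
  set p : Fin m → ℝ := powVec x Yt with hp
  have hppos : ∀ j, 0 < p j := fun j =>
    Finset.prod_pos (fun i _ => Real.rpow_pos_of_pos (hx i) _)
  have hcb' : ∀ c : Fin m,
      (∑ i, if (i, c) ∈ E then k (i, c) * p i else 0)
        = (∑ e ∈ E.filter (fun e => e.1 = c), k e) * p c := by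
    intro c
    have h := congrFun hcb c
    rw [lap_apply] at h
    simp only [Pi.zero_apply] at h
    linarith [h]
  set Rsym : Fin m → Fin m → Prop := fun u w => (u, w) ∈ E ∨ (w, u) ∈ E with hR
  have hsym : Symmetric Rsym := fun u w h => h.symm
  have hconnsym : Symmetric (Relation.ReflTransGen Rsym) :=
    by haveI : Std.Symm Rsym := ⟨fun _ _ h => hsym h⟩; exact fun a b h => Std.Symm.symm a b h
  ext v
  simp only [LinearMap.mem_ker, Matrix.mulVecLin_apply]
  constructor
  · intro hv
    have hv' : ∀ c : Fin m,
        (∑ i, if (i, c) ∈ E then k (i, c) * (p i * v i) else 0)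
          = (∑ e ∈ E.filter (fun e => e.1 = c), k e) * (p c * v c) := by
      intro c
      have h := congrFun hv c
      rw [← Matrix.mulVec_mulVec, lap_apply] at h
      simp only [Matrix.mulVec_diagonal] at h
      simp only [Pi.zero_apply] at h
      linarith [h]
    -- key step: if v is maximal on the component of c, all in-neighbors of c equal c
    have key : ∀ c : Fin m, (∀ b, Relation.ReflTransGen Rsym c b → v b ≤ v c) →
        ∀ b, (b, c) ∈ E → v b = v c := by
      intro c hmax b hbc
      set g : Fin m → ℝ := fun i => if (i, c) ∈ E then k (i, c) * p i * (v i - v c) else 0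
        with hg
      have hgsum : ∑ i, g i = 0 := by
        have : ∀ i, g i = (if (i, c) ∈ E then k (i, c) * (p i * v i) else 0)
            - v c * (if (i, c) ∈ E then k (i, c) * p i else 0) := by
          intro i; by_cases h : (i, c) ∈ E <;> simp [hg, h] <;> ring
        rw [Finset.sum_congr rfl (fun i _ => this i)]
        rw [Finset.sum_sub_distrib, ← Finset.mul_sum, hv' c, hcb' c]
        ring
      have hgnp : ∀ i ∈ Finset.univ, g i ≤ 0 := by
        intro i _
        by_cases h : (i, c) ∈ E
        · have hvle : v i ≤ v c := hmax i (Relation.ReflTransGen.single (Or.inr h))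
          have : k (i, c) * p i * (v i - v c) ≤ 0 := by
            apply mul_nonpos_of_nonneg_of_nonpos
            · exact le_of_lt (mul_pos (hk _ h) (hppos i))
            · linarith
          simpa [hg, h] using this
        · simp [hg, h]
      have hz := (Finset.sum_eq_zero_iff_of_nonpos hgnp).mp hgsum b (Finset.mem_univ b)
      simp only [hg, hbc, if_true] at hz
      have hk' : 0 < k (b, c) := hk _ hbc
      have hp' : 0 < p b := hppos b
      have : v b - v c = 0 := by
        rcases mul_eq_zero.mp hz with h | h
        · rcases mul_eq_zero.mp h with h | h
          · exact absurd h (ne_of_gt hk')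
          · exact absurd h (ne_of_gt hp')
        · exact h
      linarith
    -- For each edge, endpoints agree
    have hedge : ∀ e ∈ E, v e.1 = v e.2 := by
      intro e he
      obtain ⟨i₀, i₁⟩ := e
      have hT : ∃ q, Relation.ReflTransGen Rsym i₁ q ∧
          ∀ b, Relation.ReflTransGen Rsym i₁ b → v b ≤ v q := by
        obtain ⟨q, hq, hqm⟩ := Finset.exists_max_image
          (Finset.univ.filter (fun b => Relation.ReflTransGen Rsym i₁ b)) v
          ⟨i₁, Finset.mem_filter.mpr ⟨Finset.mem_univ _, Relation.ReflTransGen.refl⟩⟩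
        refine ⟨q, (Finset.mem_filter.mp hq).2, fun b hb => hqm b ?_⟩
        simp [hb]
      obtain ⟨q, hqconn, hqmax⟩ := hT
      have claimB : ∀ b, Relation.ReflTransGen (fun u w => (u, w) ∈ E) b q → v b = v q := by
        intro b hb
        induction hb using Relation.ReflTransGen.head_induction_on with
        | refl => rfl
        | head h' h ih =>
          rename_i a c
          have hcq : Relation.ReflTransGen Rsym c q :=
            Relation.ReflTransGen.mono (fun u w h => Or.inl h) _ _ h
          have hi₁c : Relation.ReflTransGen Rsym i₁ c :=
            hqconn.trans (hconnsym hcq)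
          have hcmax : ∀ b', Relation.ReflTransGen Rsym c b' → v b' ≤ v c := by
            intro b' hb'
            have := hqmax b' (hi₁c.trans hb')
            linarith [ih]
          have := key c hcmax a h'
          linarith [ih]
      have hv1 : v i₁ = v q := claimB i₁ (hwr i₁ q hqconn)
      have hv0 : v i₀ = v q := by
        apply claimB i₀
        apply hwr i₀ q
        exact (Relation.ReflTransGen.single (show Rsym i₀ i₁ from Or.inl he)).trans hqconn
      simp only []
      rw [hv0, hv1]
    funext e
    rw [incT_apply]
    rw [hedge e e.2]
    simp
  · intro hv
    have hedge : ∀ e ∈ E, v e.1 = v e.2 := by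
      intro e he
      have h := congrFun hv ⟨e, he⟩
      rw [incT_apply] at h
      simp only [Pi.zero_apply] at h
      linarith
    funext c
    rw [← Matrix.mulVec_mulVec, lap_apply]
    simp only [Matrix.mulVec_diagonal]
    have hsum : (∑ i, if (i, c) ∈ E then k (i, c) * (p i * v i) else 0)
        = v c * (∑ i, if (i, c) ∈ E then k (i, c) * p i else 0) := by
      rw [Finset.mul_sum]
      apply Finset.sum_congr rfl
      intro i _
      by_cases h : (i, c) ∈ E
      · have := hedge (i, c) h
        simp only [h, if_true]
        simp only at this
        rw [this]; ring
      · simp [h]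
    rw [hsum, hcb' c]
    show v c * (_ * p c) - _ * (p c * v c) = 0
    ring
end

section
/- Let G be the directed m-cycle, let Y, Ỹ ∈ ℝ^{n×V}, let k ∈ ℝ^E_+, and let x* ∈ Z_k be a complex-balanced equilibrium. Then the quantity c = k_{i→i'} · (x*)^{ỹ(i)} (where ỹ(i) is the i-th column of Ỹ) is the same positive number for all edges (i→i') ∈ E, one has A_k diag((x*)^Ỹ) = c · A_{k=1}, and consequently J(x*) = c · Y A_{k=1} Ỹᵀ diag((x*)^{−1}). -/
open Matrix Polynomial Filter Topology

/-- for the directed `m`-cycle, at a complex-balanced equilibrium the quantity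
`c = k_{i→i'} (x*)^{ỹ(i)}` is the same for all edges, `A_k diag((x*)^Ỹ) = c A_{k=1}`, and
`J(x*) = c ⬝ Y A_{k=1} Ỹᵀ diag((x*)⁻¹)`. -/
theorem stmt11 {n : ℕ} (m : ℕ) [NeZero m] (hm : 2 ≤ m)
    (Y Yt : Matrix (Fin n) (Fin m) ℝ)
    (k : Fin m × Fin m → ℝ) (hk : ∀ e ∈ cycleEdges m, 0 < k e)
    (x : Fin n → ℝ) (hx : ∀ i, 0 < x i)
    (hcb : (laplacian (cycleEdges m) k).mulVec (powVec x Yt) = 0) :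
    ∃ c : ℝ, 0 < c ∧
      (∀ e ∈ cycleEdges m, k e * powVec x Yt e.1 = c) ∧
      laplacian (cycleEdges m) k * Matrix.diagonal (powVec x Yt) =
        c • laplacian (cycleEdges m) (fun _ => 1) ∧
      jacobianMat (cycleEdges m) k Y Yt x =
        c • (Y * laplacian (cycleEdges m) (fun _ => 1) * Ytᵀ *
          Matrix.diagonal (fun i => (x i)⁻¹)) := by
  
  classical
  have hmem : ∀ e : Fin m × Fin m, e ∈ cycleEdges m ↔ e.2 = e.1 + 1 := by
    intro e
    simp only [cycleEdges, Finset.mem_image, Finset.mem_univ, true_and]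
    constructor
    · rintro ⟨a, rfl⟩; rfl
    · intro h; exact ⟨e.1, Prod.ext rfl h.symm⟩
  have hfilter : ∀ i : Fin m, (cycleEdges m).filter (fun e => e.1 = i) = {(i, i + 1)} := by
    intro i
    ext e
    simp only [Finset.mem_filter, hmem, Finset.mem_singleton]
    constructor
    · rintro ⟨h2, h1⟩
      exact Prod.ext h1 (by rw [h2, h1])
    · rintro rfl; exact ⟨rfl, rfl⟩
  have hlap : ∀ (κ : Fin m × Fin m → ℝ) (i' i : Fin m),
      laplacian (cycleEdges m) κ i' i =
        (if i' = i + 1 then κ (i, i + 1) else 0) - (if i' = i then κ (i, i + 1) else 0) := by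
    intro κ i' i
    unfold laplacian
    rw [hfilter i, Finset.sum_singleton]
    congr 1
    by_cases h : i' = i + 1
    · rw [if_pos, if_pos h]
      · rw [h]
      · rw [hmem]; exact h
    · rw [if_neg, if_neg h]
      rw [hmem]; exact h
  set v : Fin m → ℝ := powVec x Yt with hvdef
  have hv : ∀ j, 0 < v j := by
    intro j
    exact Finset.prod_pos (fun i _ => Real.rpow_pos_of_pos (hx i) _)
  set f : Fin m → ℝ := fun i => k (i, i + 1) * v i with hfdef
  have hmul : ∀ j : Fin m, (laplacian (cycleEdges m) k).mulVec v j
      = f (j - 1) - f j := by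
    intro j
    simp only [Matrix.mulVec, dotProduct, hlap, sub_mul, ite_mul, zero_mul,
      Finset.sum_sub_distrib]
    congr 1
    · rw [Finset.sum_eq_single (j - 1)]
      · rw [if_pos (by rw [sub_add_cancel])]
      · intro b _ hb
        rw [if_neg]
        intro h
        exact hb (eq_sub_of_add_eq h.symm)
      · intro h; exact absurd (Finset.mem_univ _) h
    · rw [Finset.sum_eq_single j]
      · rw [if_pos rfl]
      · intro b _ hb
        rw [if_neg (fun h => hb h.symm)]
      · intro h; exact absurd (Finset.mem_univ _) h
  have hstep : ∀ j : Fin m, f (j - 1) = f j := by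
    intro j
    have h := congrFun hcb j
    rw [hmul j] at h
    simpa [sub_eq_zero] using h
  open Fin.NatCast in
  have hnat : ∀ N : ℕ, f ((N : Fin m)) = f 0 := by
    intro N
    induction N with
    | zero => simp
    | succ N ih =>
      have h1 : ((N + 1 : ℕ) : Fin m) = (N : Fin m) + 1 := by push_cast; ring
      have := hstep ((N + 1 : ℕ) : Fin m)
      rw [h1, add_sub_cancel_right] at this
      rw [h1, ← this, ih]
  have hconst : ∀ i : Fin m, f i = f 0 := by
    intro i
    have := hnat i.val
    rwa [Fin.cast_val_eq_self] at this
  refine ⟨f 0, ?_, ?_, ?_, ?_⟩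
  · have hmem0 : ((0 : Fin m), (0 : Fin m) + 1) ∈ cycleEdges m := (hmem _).mpr rfl
    exact mul_pos (hk _ hmem0) (hv 0)
  · intro e he
    have h2 : e.2 = e.1 + 1 := (hmem e).mp he
    have : e = (e.1, e.1 + 1) := Prod.ext rfl h2
    rw [this]
    exact hconst e.1
  · ext i' i
    rw [Matrix.mul_diagonal, Matrix.smul_apply, hlap, hlap, smul_eq_mul, sub_mul, mul_sub]
    have hc : k (i, i + 1) * v i = f 0 := hconst i
    congr 1 <;> split_ifs <;> simp [hc]
  · have h3 : laplacian (cycleEdges m) k * Matrix.diagonal v =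
        f 0 • laplacian (cycleEdges m) (fun _ => 1) := by
      ext i' i
      rw [Matrix.mul_diagonal, Matrix.smul_apply, hlap, hlap, smul_eq_mul, sub_mul, mul_sub]
      have hc : k (i, i + 1) * v i = f 0 := hconst i
      congr 1 <;> split_ifs <;> simp [hc]
    unfold jacobianMat
    rw [Matrix.mul_assoc Y (laplacian (cycleEdges m) k) (Matrix.diagonal v), h3]
    rw [Matrix.mul_smul, Matrix.smul_mul, Matrix.smul_mul]
end

section
/- Let A ∈ ℝ^{2×2}. Then: (i) A is D-stable (AD is stable for every D ∈ 𝒟₊) if and only if A is a P₀⁺-matrix, i.e., a₁₁ ≤ 0, a₂₂ ≤ 0, det A ≥ 0, at least one of −a₁₁, −a₂₂ is positive, and det A > 0. (ii) A is diagonally stable (there exists P ∈ 𝒟₊ with PA + AᵀP negative definite) if and only if A is a P-matrix, i.e., a₁₁ < 0, a₂₂ < 0, and det A > 0. -/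
open Matrix Polynomial Filter Topology

lemma quadStable (t d : ℝ) :
    (∀ z : ℂ, z^2 - (t:ℂ)*z + (d:ℂ) = 0 → z.re < 0) ↔ (t < 0 ∧ 0 < d) := by
  constructor
  · intro h
    by_cases hΔ : 0 ≤ t^2 - 4*d
    · set s := Real.sqrt (t^2 - 4*d) with hsdef
      have hs0 : 0 ≤ s := Real.sqrt_nonneg _
      have hs : s^2 = t^2 - 4*d := Real.sq_sqrt hΔ
      have r1 : ((t+s)/2 : ℝ)^2 - t*((t+s)/2) + d = 0 := by nlinarith [hs]
      have r2 : ((t-s)/2 : ℝ)^2 - t*((t-s)/2) + d = 0 := by nlinarith [hs]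
      have h1 := h (((t+s)/2 : ℝ) : ℂ) (by exact_mod_cast congrArg (Complex.ofReal) r1)
      have h2 := h (((t-s)/2 : ℝ) : ℂ) (by exact_mod_cast congrArg (Complex.ofReal) r2)
      rw [Complex.ofReal_re] at h1 h2
      constructor
      · nlinarith
      · nlinarith
    · push_neg at hΔ
      set b := Real.sqrt (4*d - t^2) / 2 with hbdef
      have hb2 : b^2 = (4*d - t^2)/4 := by
        rw [hbdef, div_pow, Real.sq_sqrt (by linarith)]; norm_num
      set z : ℂ := (t/2 : ℝ) + (b : ℝ) * Complex.I with hz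
      have hb2C : (b:ℂ)^2 = (4*(d:ℂ) - (t:ℂ)^2)/4 := by
        exact_mod_cast congrArg Complex.ofReal hb2
      have hroot : z^2 - (t:ℂ)*z + (d:ℂ) = 0 := by
        rw [hz]
        push_cast
        linear_combination Complex.I^2 * hb2C + ((4*(d:ℂ) - (t:ℂ)^2)/4) * Complex.I_sq
      have := h z hroot
      rw [hz] at this
      simp at this
      constructor
      · linarith
      · nlinarith
  · rintro ⟨ht, hd⟩ z hz
    obtain ⟨h1, h2⟩ := Complex.ext_iff.mp hz
    simp [pow_two, Complex.mul_re, Complex.mul_im] at h1 h2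
    by_cases hy : z.im = 0
    · rw [hy] at h1
      simp at h1
      by_contra hre
      push_neg at hre
      nlinarith
    · have h3 : z.im * (2*z.re - t) = 0 := by linear_combination h2
      rcases mul_eq_zero.mp h3 with h | h
      · exact absurd h hy
      · linarith

open Polynomial in
lemma charpoly_fin_two' (M : Matrix (Fin 2) (Fin 2) ℝ) :
    M.charpoly = X^2 - C M.trace * X + C M.det := by
  rw [Matrix.charpoly, Matrix.det_fin_two]
  rw [Matrix.charmatrix_apply_eq, Matrix.charmatrix_apply_eq,
    Matrix.charmatrix_apply_ne _ _ _ (by decide), Matrix.charmatrix_apply_ne _ _ _ (by decide),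
    Matrix.trace, Matrix.det_fin_two]
  simp [Fin.sum_univ_two, Matrix.diag]
  ring

lemma stab2 (M : Matrix (Fin 2) (Fin 2) ℝ) :
    IsStableMat M ↔ M.trace < 0 ∧ 0 < M.det := by
  rw [← quadStable M.trace M.det]
  unfold IsStableMat
  apply forall_congr'
  intro z
  rw [charpoly_fin_two']
  simp [Polynomial.IsRoot]

lemma qform (p : Fin 2 → ℝ) (A : Matrix (Fin 2) (Fin 2) ℝ) (x : Fin 2 → ℝ) :
    x ⬝ᵥ ((Matrix.diagonal p) * A + Aᵀ * (Matrix.diagonal p)).mulVec x =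
      2*(p 0 * A 0 0)*(x 0)^2 + 2*(p 0 * A 0 1 + p 1 * A 1 0)*(x 0)*(x 1)
        + 2*(p 1 * A 1 1)*(x 1)^2 := by
  simp [dotProduct, Matrix.vecHead, Matrix.vecTail, Matrix.mulVec, Matrix.add_apply, Matrix.mul_apply,
    Matrix.diagonal, Matrix.transpose_apply, Fin.sum_univ_two]
  ring

lemma tr2 (A : Matrix (Fin 2) (Fin 2) ℝ) (d : Fin 2 → ℝ) :
    (A * Matrix.diagonal d).trace = A 0 0 * d 0 + A 1 1 * d 1 := by
  simp [Matrix.trace, Matrix.diag, Matrix.mul_diagonal, Fin.sum_univ_two]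

lemma det2 (A : Matrix (Fin 2) (Fin 2) ℝ) (d : Fin 2 → ℝ) :
    (A * Matrix.diagonal d).det = A.det * (d 0 * d 1) := by
  rw [Matrix.det_mul, Matrix.det_diagonal, Fin.prod_univ_two]

/-- characterization of D-stability and diagonal stability for 2×2 matrices. -/
theorem stmt17 (A : Matrix (Fin 2) (Fin 2) ℝ) :
    ((∀ D, IsPosDiag D → IsStableMat (A * D)) ↔
      (A 0 0 ≤ 0 ∧ A 1 1 ≤ 0 ∧ 0 ≤ A.det ∧ (0 < -A 0 0 ∨ 0 < -A 1 1) ∧ 0 < A.det)) ∧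
    ((∃ P, IsPosDiag P ∧
        ∀ x : Fin 2 → ℝ, x ≠ 0 → x ⬝ᵥ (P * A + Aᵀ * P).mulVec x < 0) ↔
      (A 0 0 < 0 ∧ A 1 1 < 0 ∧ 0 < A.det)) := by
  constructor
  · constructor
    · intro h
      have h1 := (stab2 _).mp (h (Matrix.diagonal fun _ => 1) ⟨_, fun _ => one_pos, rfl⟩)
      rw [tr2, det2] at h1
      have hdet : 0 < A.det := by simpa using h1.2
      have htr : A 0 0 + A 1 1 < 0 := by linarith [h1.1]
      have key : ∀ u v : ℝ, 0 < u → 0 < v → A 0 0 * u + A 1 1 * v < 0 := by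
        intro u v hu hv
        have h2 := (stab2 _).mp (h (Matrix.diagonal ![u, v])
          ⟨![u, v], by intro i; fin_cases i <;> simpa, rfl⟩)
        rw [tr2] at h2
        simpa using h2.1
      have ha : A 0 0 ≤ 0 := by
        by_contra ha; push_neg at ha
        have := key ((|A 1 1| + 1)/(A 0 0)) 1 (div_pos (by positivity) ha) one_pos
        rw [mul_div_cancel₀ _ (ne_of_gt ha)] at this
        nlinarith [neg_abs_le (A 1 1)]
      have hb : A 1 1 ≤ 0 := by
        by_contra hb; push_neg at hb
        have := key 1 ((|A 0 0| + 1)/(A 1 1)) one_pos (div_pos (by positivity) hb)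
        rw [mul_div_cancel₀ _ (ne_of_gt hb)] at this
        nlinarith [neg_abs_le (A 0 0)]
      refine ⟨ha, hb, le_of_lt hdet, ?_, hdet⟩
      rcases lt_or_eq_of_le ha with h' | h'
      · exact Or.inl (by linarith)
      · exact Or.inr (by linarith)
    · rintro ⟨ha, hb, -, hor, hdet⟩ D ⟨dv, hdv, rfl⟩
      rw [stab2, tr2, det2]
      refine ⟨?_, mul_pos hdet (mul_pos (hdv 0) (hdv 1))⟩
      rcases hor with h' | h'
      · nlinarith [hdv 0, hdv 1, mul_nonpos_of_nonpos_of_nonneg hb (le_of_lt (hdv 1))]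
      · nlinarith [hdv 0, hdv 1, mul_nonpos_of_nonpos_of_nonneg ha (le_of_lt (hdv 0))]
  · constructor
    · rintro ⟨P, ⟨p, hp, rfl⟩, hP⟩
      have hp0 := hp 0; have hp1 := hp 1
      have ha : A 0 0 < 0 := by
        have h0 := hP ![1, 0] (by
          intro h; have := congrFun h 0; simp at this)
        rw [qform] at h0
        simp at h0
        nlinarith
      have hb : A 1 1 < 0 := by
        have h0 := hP ![0, 1] (by
          intro h; have := congrFun h 1; simp at this)
        rw [qform] at h0
        simp at h0
        nlinarith
      refine ⟨ha, hb, ?_⟩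
      rw [Matrix.det_fin_two]
      have h0 := hP ![p 0 * A 0 1 + p 1 * A 1 0, -(2 * (p 0 * A 0 0))] (by
        intro h; have := congrFun h 1; simp at this
        rcases this with h' | h'
        exacts [absurd h' (ne_of_gt hp0), absurd h' (ne_of_lt ha)])
      rw [qform] at h0
      simp at h0
      have hβ2 : (p 0 * A 0 1 + p 1 * A 1 0)^2 < 4*(p 0)*(p 1)*(A 0 0 * A 1 1) := by
        nlinarith [h0, mul_pos hp0 (neg_pos.mpr ha)]
      nlinarith [hβ2, sq_nonneg (p 0 * A 0 1 - p 1 * A 1 0), mul_pos hp0 hp1]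
    · rintro ⟨ha, hb, hdet⟩
      rw [Matrix.det_fin_two] at hdet
      set a := A 0 0; set d := A 1 1; set b := A 0 1; set c := A 1 0
      have had : 0 < a * d := by nlinarith
      set t : ℝ := if c = 0 then (b^2 + 1)/(4*(a*d)) else (2*(a*d) - b*c)/c^2 with htdef
      have htpos : 0 < t := by
        rw [htdef]
        split_ifs with hc
        · exact div_pos (by positivity) (by linarith)
        · have : 0 < c^2 := by positivity
          apply div_pos (by nlinarith) this
      have hkey : (b + t*c)^2 < 4*t*(a*d) := by
        rw [htdef]
        split_ifs with hc
        · rw [hc]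
          have e : 4*((b^2+1)/(4*(a*d)))*(a*d) = b^2+1 := by
            field_simp
            exact div_self (ne_of_gt had)
          rw [mul_zero, add_zero, e]
          nlinarith
        · have hc2 : (0:ℝ) < c^2 := by positivity
          have h1 : (b + (2*(a*d) - b*c)/c^2 * c) * c = 2*(a*d) := by
            field_simp
            ring
          have h2 : ((2*(a*d) - b*c)/c^2) * c^2 = 2*(a*d) - b*c := by
            field_simp
          nlinarith [sq_nonneg c, mul_pos had (sub_pos.mpr hdet)]
      refine ⟨Matrix.diagonal ![1, t], ⟨![1, t], by
        intro i; fin_cases i <;> simp [htpos], rfl⟩, ?_⟩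
      intro x hx
      rw [qform]
      simp
      by_cases h1 : x 1 = 0
      · have h0 : x 0 ≠ 0 := by
          intro h0; exact hx (funext fun i => by fin_cases i <;> simp [h0, h1])
        rw [h1]
        nlinarith [sq_pos_of_ne_zero h0]
      · nlinarith [sq_nonneg (2*a*(x 0) + (b + t*c)*(x 1)),
          mul_pos (sub_pos.mpr hkey) (sq_pos_of_ne_zero h1), ha, hb, htpos]
end
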